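/- arXiv:1105.5129 — 4 statements merged into one kernel-verified Lean document; each statement's English description precedes it below -/
import Mathlib

section
/- For every pair of disjoint sets A, B ⊆ {0,1,2}^n, the total number of upward directed edges leaving A plus the total number leaving B is at least |A|·|B|/3^n, where for each coordinate i and each fixed v_{-i} ∈ {0,1,2}^{n-1} the directed edges in direction i are 0→1, 1→2, 0→2, and an edge counts as leaving A if its tail is in A and its head is not in A. -/
/-!
Induct on `n`, slicing along the first coordinate: `A` is the union of the layers `A_s`,
`s ∈ {0,1,2}`. Edges in the other directions are exactly the edges of the slices, and the edges
in the first direction from level `s` to level `t > s` leaving `A` are counted by `|A_s \ A_t|`.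
In `|A| |B| = ∑ a_s b_t` the diagonal terms are bounded by induction, and each off-diagonal pair
satisfies `a_s b_t + a_t b_s - a_s b_s - a_t b_t = (a_s - a_t)(b_t - b_s)`, which is at most
`3ⁿ (|A_s \ A_t| + |B_s \ B_t|)` because one factor is at most `3ⁿ` in absolute value and the
other is bounded by the corresponding set difference whenever the product is positive.
-/

open Finset

abbrev Cube (n : ℕ) := Fin n → Fin 3

/-- The upward directed edges in direction `i` whose tail is in `A` and head is not in `A`:
a triple `(v, t)` encodes the edge from `v` to `Function.update v i t` with `v i < t`. -/
def edgeBorder (n : ℕ) (A : Finset (Cube n)) (i : Fin n) : Finset (Cube n × Fin 3) :=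
  univ.filter (fun p => p.1 ∈ A ∧ Function.update p.1 i p.2 ∉ A ∧ p.1 i < p.2)

/-- The full upper edge border `∂A = ⋃ i, ∂ᵢ A`, encoded as triples `(i, v, t)`. -/
def totalBorder (n : ℕ) (A : Finset (Cube n)) : Finset (Fin n × Cube n × Fin 3) :=
  univ.filter (fun q => q.2.1 ∈ A ∧ Function.update q.2.1 q.1 q.2.2 ∉ A ∧ q.2.1 q.1 < q.2.2)

lemma Fintype.sum_pi_fin_succ {n : ℕ} {α M : Type*} [Fintype α] [AddCommMonoid M]
    (f : (Fin (n + 1) → α) → M) :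
    ∑ v, f v = ∑ s, ∑ u, f (Fin.cons s u) := by
  rw [← (Fin.consEquiv fun _ => α).sum_comp, Fintype.sum_prod_type]
  rfl

-- `(x - u) * (v - y) ≤ N * (d + e)`, written without subtraction.
lemma Nat.mul_add_mul_le {x y u v d e N : ℕ} (hu : u ≤ N) (hv : v ≤ N)
    (hd : x ≤ d + u) (he : y ≤ e + v) :
    x * v + u * y ≤ x * y + u * v + N * (d + e) := by
  rcases le_total x u with hxu | hux <;> rcases le_total y v with hyv | hvy <;> nlinarith

section Cube

variable {n : ℕ}

lemma card_totalBorder_eq_sum_card_edgeBorder (A : Finset (Cube n)) :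
    #(totalBorder n A) = ∑ i, #(edgeBorder n A i) := by
  simp only [totalBorder, edgeBorder, card_filter, Fintype.sum_prod_type]

lemma card_edgeBorder_eq_sum (A : Finset (Cube n)) (i : Fin n) :
    #(edgeBorder n A i) =
      ∑ v, ∑ t, if v ∈ A ∧ Function.update v i t ∉ A ∧ v i < t then 1 else 0 := by
  simp only [edgeBorder, card_filter, Fintype.sum_prod_type]

def cubeSlice (A : Finset (Cube (n + 1))) (s : Fin 3) : Finset (Cube n) :=
  univ.filter fun u => Fin.cons s u ∈ A

@[simp]
lemma mem_cubeSlice {A : Finset (Cube (n + 1))} {s : Fin 3} {u : Cube n} :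
    u ∈ cubeSlice A s ↔ Fin.cons s u ∈ A := by
  simp [cubeSlice]

lemma disjoint_cubeSlice {A B : Finset (Cube (n + 1))} (hAB : Disjoint A B) (s : Fin 3) :
    Disjoint (cubeSlice A s) (cubeSlice B s) :=
  disjoint_left.2 fun _ hA hB => disjoint_left.1 hAB (mem_cubeSlice.1 hA) (mem_cubeSlice.1 hB)

lemma card_cubeSlice_le (A : Finset (Cube (n + 1))) (s : Fin 3) : #(cubeSlice A s) ≤ 3 ^ n := by
  simpa using card_le_univ (cubeSlice A s)

lemma card_eq_sum_card_cubeSlice (A : Finset (Cube (n + 1))) : #A = ∑ s, #(cubeSlice A s) := by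
  simp only [cubeSlice, card_filter, ← Fintype.sum_pi_fin_succ fun v => if v ∈ A then 1 else 0]
  simp

lemma card_edgeBorder_succ (A : Finset (Cube (n + 1))) (j : Fin n) :
    #(edgeBorder (n + 1) A j.succ) = ∑ s, #(edgeBorder n (cubeSlice A s) j) := by
  simp only [card_edgeBorder_eq_sum, Fintype.sum_pi_fin_succ (fun v => ∑ t : Fin 3, _),
    ← Fin.cons_update, Fin.cons_succ, mem_cubeSlice]

lemma card_edgeBorder_zero (A : Finset (Cube (n + 1))) :
    #(edgeBorder (n + 1) A 0) = ∑ s, ∑ t with s < t, #(cubeSlice A s \ cubeSlice A t) := by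
  simp only [card_edgeBorder_eq_sum, Fintype.sum_pi_fin_succ (fun v => ∑ t : Fin 3, _),
    Fin.update_cons_zero, Fin.cons_zero]
  refine sum_congr rfl fun s _ => ?_
  rw [sum_comm, sum_filter]
  refine sum_congr rfl fun t _ => ?_
  by_cases hst : s < t
  · simp only [hst, and_true, if_true, ← card_filter]
    congr 1
    ext u
    simp
  · simp [hst]

lemma card_totalBorder_succ (A : Finset (Cube (n + 1))) :
    #(totalBorder (n + 1) A) = ∑ s, #(totalBorder n (cubeSlice A s)) +
      ∑ s, ∑ t with s < t, #(cubeSlice A s \ cubeSlice A t) := by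
  rw [card_totalBorder_eq_sum_card_edgeBorder, Fin.sum_univ_succ, card_edgeBorder_zero, add_comm]
  simp only [card_edgeBorder_succ, card_totalBorder_eq_sum_card_edgeBorder]
  rw [sum_comm]

end Cube

lemma card_mul_card_le_totalBorder (n : ℕ) {A B : Finset (Cube n)} (hAB : Disjoint A B) :
    #A * #B ≤ 3 ^ n * (#(totalBorder n A) + #(totalBorder n B)) := by
  induction n with
  | zero =>
    have hcard := card_union_of_disjoint hAB ▸ card_le_univ (A ∪ B)
    simp only [Fintype.card_pi, Fintype.card_fin, prod_const, card_univ, pow_zero] at hcard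
    obtain h | h : #A = 0 ∨ #B = 0 := by omega
    all_goals simp [h]
  | succ n ih =>
    have diag (s : Fin 3) := ih (disjoint_cubeSlice hAB s)
    have cross (s t : Fin 3) :=
      Nat.mul_add_mul_le (card_cubeSlice_le A t) (card_cubeSlice_le B t)
        (card_le_card_sdiff_add_card (s := cubeSlice A s) (t := cubeSlice A t))
        (card_le_card_sdiff_add_card (s := cubeSlice B s) (t := cubeSlice B t))
    -- the edges in the first direction are needed with weight `3ⁿ` only, not `3ⁿ⁺¹`
    have slack (s t : Fin 3) := Nat.zero_le
      (3 ^ n * (#(cubeSlice A s \ cubeSlice A t) + #(cubeSlice B s \ cubeSlice B t)))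
    rw [card_eq_sum_card_cubeSlice A, card_eq_sum_card_cubeSlice B, card_totalBorder_succ,
      card_totalBorder_succ]
    simp only [Fin.sum_univ_three, sum_filter, pow_succ, Fin.reduceLT, ↓reduceIte, zero_add,
      add_zero]
    linarith [diag 0, diag 1, diag 2, cross 0 1, cross 0 2, cross 1 2, slack 0 1, slack 0 2,
      slack 1 2]

/-- For disjoint `A, B ⊆ {0,1,2}ⁿ`, `|∂A| + |∂B| ≥ |A|·|B| / 3ⁿ`. -/
theorem stmt0 (n : ℕ) (A B : Finset (Cube n)) (hAB : Disjoint A B) :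
    ((totalBorder n A).card + (totalBorder n B).card : ℝ) ≥ A.card * B.card / 3 ^ n := by
  rw [ge_iff_le, div_le_iff₀ (by positivity)]
  exact_mod_cast (card_mul_card_le_totalBorder n hAB).trans_eq (mul_comm _ _)
end

section
/- Let A ⊆ {0,1,2}^n and let A' be obtained from A by successively applying the monotonization steps in coordinates 1 through n. Then |A' \ A| ≤ |∂A|, where ∂A is the upper edge border of the original set A. -/
open Finset

/-- The shifting operation in coordinate `i` toward value `t`. -/
def shiftTo (n : ℕ) (i : Fin n) (t : Fin 3) (A : Finset (Cube n)) : Finset (Cube n) :=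
  (A.filter (fun v => ¬(v i < t ∧ Function.update v i t ∉ A))) ∪
  ((A.filter (fun v => v i < t ∧ Function.update v i t ∉ A)).image
    (fun v => Function.update v i t))

/-- The `i`-th monotonization step. -/
def monStep (n : ℕ) (i : Fin n) (A : Finset (Cube n)) : Finset (Cube n) :=
  shiftTo n i 1 (shiftTo n i 2 A)

/-- Successive monotonization in coordinates `1, …, n`. -/
def monAll (n : ℕ) (A : Finset (Cube n)) : Finset (Cube n) :=
  (List.finRange n).foldl (fun S i => monStep n i S) A

/-! A monotonization step in coordinate `i` maps the current set `B` pointwise, each point being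
fixed or having its `i`-th coordinate raised. A new point outside `A` is then either the image of a
point of `B \ A`, or the head of an edge `v → v[i ↦ t]` of `∂ᵢ A` whose tail `v` is its
preimage. Distinct tails give distinct edges, so step `i` adds at most `|∂ᵢ A|` points outside
`A`, and summing over `i` gives `|∂A|`. -/

/-- `∂ᵢ A`. -/
def coordBorder (n : ℕ) (A : Finset (Cube n)) (i : Fin n) : Finset (Fin n × Cube n × Fin 3) :=
  (totalBorder n A).filter (fun q => q.1 = i)

lemma card_totalBorder_eq_sum (n : ℕ) (A : Finset (Cube n)) :
    (totalBorder n A).card = ∑ i, (coordBorder n A i).card :=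
  card_eq_sum_card_fiberwise (fun q _ => mem_univ q.1)

def RaisesAt {n : ℕ} (i : Fin n) (f : Cube n → Cube n) : Prop :=
  ∀ v, f v = v ∨ ∃ t, v i < t ∧ f v = Function.update v i t

lemma RaisesAt.comp {n : ℕ} {i : Fin n} {f g : Cube n → Cube n}
    (hf : RaisesAt i f) (hg : RaisesAt i g) : RaisesAt i (f ∘ g) := by
  intro v
  rcases hg v with hv | ⟨t, hvt, hv⟩
  · simpa [hv] using hf v
  · rcases hf (Function.update v i t) with hw | ⟨t', htt', hw⟩
    · exact Or.inr ⟨t, hvt, by simp [hv, hw]⟩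
    · refine Or.inr ⟨t', hvt.trans (by simpa using htt'), ?_⟩
      simp [hv, hw]

lemma exists_raisesAt_shiftTo_eq_image (n : ℕ) (i : Fin n) (t : Fin 3) (A : Finset (Cube n)) :
    ∃ f, RaisesAt i f ∧ shiftTo n i t A = A.image f := by
  classical
  refine ⟨fun v => if v i < t ∧ Function.update v i t ∉ A then Function.update v i t else v,
    fun v => ?_, ?_⟩
  · by_cases h : v i < t ∧ Function.update v i t ∉ A
    · exact Or.inr ⟨t, h.1, if_pos h⟩
    · exact Or.inl (if_neg h)
  · ext x
    simp only [shiftTo, mem_union, mem_filter, mem_image]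
    constructor
    · rintro (⟨hx, h⟩ | ⟨v, ⟨hv, h⟩, rfl⟩)
      · exact ⟨x, hx, if_neg h⟩
      · exact ⟨v, hv, if_pos h⟩
    · rintro ⟨v, hv, rfl⟩
      by_cases h : v i < t ∧ Function.update v i t ∉ A
      · exact Or.inr ⟨v, ⟨hv, h⟩, (if_pos h).symm⟩
      · exact Or.inl ⟨by rwa [if_neg h], by rwa [if_neg h]⟩

lemma exists_raisesAt_monStep_eq_image (n : ℕ) (i : Fin n) (B : Finset (Cube n)) :
    ∃ f, RaisesAt i f ∧ monStep n i B = B.image f := by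
  classical
  obtain ⟨g, hg, hgB⟩ := exists_raisesAt_shiftTo_eq_image n i 2 B
  obtain ⟨f, hf, hfB⟩ := exists_raisesAt_shiftTo_eq_image n i 1 (shiftTo n i 2 B)
  refine ⟨f ∘ g, hf.comp hg, ?_⟩
  rw [monStep, hfB, hgB, image_image]

lemma card_filter_image_not_mem_le_coordBorder {n : ℕ} {i : Fin n} {f : Cube n → Cube n}
    (hf : RaisesAt i f) (A : Finset (Cube n)) :
    (A.filter (fun v => f v ∉ A)).card ≤ (coordBorder n A i).card := by
  refine card_le_card_of_injOn (fun v => (i, v, f v i)) (fun v hv => ?_)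
    (fun v _ w _ h => congrArg (fun q => q.2.1) h)
  rw [coe_filter] at hv
  obtain ⟨hvA, hfv⟩ := hv
  obtain ⟨t, hvt, hft⟩ := (hf v).resolve_left (fun h => hfv (by rwa [h]))
  simp only [coe_filter, coordBorder, totalBorder, mem_filter, mem_univ, true_and, hft,
    Function.update_self, Set.mem_ofPred_eq, and_true]
  exact ⟨hvA, hft ▸ hfv, hvt⟩

lemma card_image_sdiff_le_of_raisesAt {n : ℕ} {i : Fin n} {f : Cube n → Cube n}
    (hf : RaisesAt i f) (A B : Finset (Cube n)) :
    (B.image f \ A).card ≤ (B \ A).card + (coordBorder n A i).card := by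
  classical
  have hsub : B.image f \ A ⊆ (B \ A).image f ∪ (A.filter (fun v => f v ∉ A)).image f := by
    intro x hx
    obtain ⟨hxB, hxA⟩ := mem_sdiff.mp hx
    obtain ⟨v, hvB, rfl⟩ := mem_image.mp hxB
    by_cases hvA : v ∈ A
    · exact mem_union_right _ (mem_image_of_mem f (mem_filter.mpr ⟨hvA, hxA⟩))
    · exact mem_union_left _ (mem_image_of_mem f (mem_sdiff.mpr ⟨hvB, hvA⟩))
  calc (B.image f \ A).card
      ≤ ((B \ A).image f).card + ((A.filter (fun v => f v ∉ A)).image f).card :=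
        (card_le_card hsub).trans (card_union_le _ _)
    _ ≤ (B \ A).card + (coordBorder n A i).card :=
        add_le_add card_image_le
          (card_image_le.trans (card_filter_image_not_mem_le_coordBorder hf A))

lemma card_monStep_sdiff_le (n : ℕ) (i : Fin n) (A B : Finset (Cube n)) :
    (monStep n i B \ A).card ≤ (B \ A).card + (coordBorder n A i).card := by
  obtain ⟨f, hf, hB⟩ := exists_raisesAt_monStep_eq_image n i B
  rw [hB]
  exact card_image_sdiff_le_of_raisesAt hf A B

lemma card_foldl_monStep_sdiff_le (n : ℕ) (A : Finset (Cube n)) (l : List (Fin n))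
    (B : Finset (Cube n)) :
    ((l.foldl (fun S i => monStep n i S) B) \ A).card ≤
      (B \ A).card + (l.map (fun i => (coordBorder n A i).card)).sum := by
  induction l generalizing B with
  | nil => simp
  | cons i l ih =>
    have := card_monStep_sdiff_le n i A B
    simp only [List.foldl_cons, List.map_cons, List.sum_cons]
    linarith [ih (monStep n i B)]

/-- The number of new elements created by the full monotonization is at most the size of the
upper edge border of the original set. -/
theorem stmt4 (n : ℕ) (A : Finset (Cube n)) :
    ((monAll n A) \ A).card ≤ (totalBorder n A).card := by
  have h := card_foldl_monStep_sdiff_le n A (List.finRange n) A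
  rwa [sdiff_self, bot_eq_empty, card_empty, zero_add,
    ← List.sum_toFinset _ (List.nodup_finRange n), List.toFinset_finRange,
    ← card_totalBorder_eq_sum] at h
end

section
/- Let G be a GSWF on n voters and m ≥ 3 alternatives satisfying IIA, and let F be an SCF on the m alternatives such that whenever G(x) has a Generalized Condorcet Winner, F(x) equals that winner. If Pr[G has a GCW] ≥ 1 − ε, then for every pair of alternatives a,b, M^{a,b}(F) ≤ 2ε. -/
open Finset
open scoped Classical

/-- A linear order on `m` alternatives, represented by its ranking permutation:
`σ a` is the rank of alternative `a` (rank `0` is most preferred). -/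
abbrev OrderM (m : ℕ) := Equiv.Perm (Fin m)

/-- A profile of `n` voters on `m` alternatives. -/
abbrev ProfileM (n m : ℕ) := Fin n → OrderM m

/-- Voter with ranking `σ` prefers alternative `a` over alternative `b`. -/
def PrefersM (m : ℕ) (σ : OrderM m) (a b : Fin m) : Prop := σ a < σ b

/-- The column `x^{a,b} ∈ {0,1}ⁿ` of individual preferences between `a` and `b`. -/
noncomputable def colM (n m : ℕ) (x : ProfileM n m) (a b : Fin m) : Fin n → Bool :=
  fun i => decide (PrefersM m (x i) a b)

/-- Alternative `a` is a Generalized Condorcet Winner of the pairwise aggregation `G` at `x`. -/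
def IsGCW (n m : ℕ) (G : ProfileM n m → Fin m → Fin m → Bool) (x : ProfileM n m)
    (a : Fin m) : Prop :=
  ∀ b : Fin m, b ≠ a → G x a b = true

/-- `M^{a,b}(F)` for an SCF on `m` alternatives. -/
noncomputable def MabM (n m : ℕ) (F : ProfileM n m → Fin m) (a b : Fin m) : ℝ :=
  ((univ.filter (fun p : ProfileM n m × ProfileM n m =>
      colM n m p.1 a b = colM n m p.2 a b ∧ F p.1 = a ∧ F p.2 = b)).card : ℝ) /
  ((univ.filter (fun p : ProfileM n m × ProfileM n m =>
      colM n m p.1 a b = colM n m p.2 a b)).card : ℝ)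

lemma flip_decide (m : ℕ) (σ : OrderM m) (a b : Fin m) (hab : a ≠ b) :
    decide (PrefersM m (σ * Equiv.swap a b) a b) = !decide (PrefersM m σ a b) := by
  have hne : σ a ≠ σ b := fun h => hab (σ.injective h)
  simp only [PrefersM, Equiv.Perm.mul_apply, Equiv.swap_apply_left, Equiv.swap_apply_right]
  by_cases h : σ a < σ b
  · simp [h, h.asymm]
  · have h2 : σ b < σ a := lt_of_le_of_ne (not_lt.1 h) hne.symm
    simp [h, h2]

lemma fiber_card_eq (n m : ℕ) (a b : Fin m) (hab : a ≠ b) (c c' : Fin n → Bool) :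
    (univ.filter (fun x : ProfileM n m => colM n m x a b = c)).card =
    (univ.filter (fun x : ProfileM n m => colM n m x a b = c')).card := by
  apply Finset.card_bij'
    (fun x _ => fun i => if c i = c' i then x i else x i * Equiv.swap a b)
    (fun x _ => fun i => if c i = c' i then x i else x i * Equiv.swap a b)
  · intro x hx
    simp only [mem_filter, mem_univ, true_and] at hx ⊢
    funext i
    by_cases h : c i = c' i
    · simp only [colM, h, if_pos]
      have := congrFun hx i
      simpa [colM, h] using this.trans h
    · simp only [colM, if_neg h]
      rw [flip_decide m (x i) a b hab]
      have := congrFun hx i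
      simp only [colM] at this
      rw [this]
      cases hc : c i <;> cases hc' : c' i <;> simp_all
  · intro x hx
    simp only [mem_filter, mem_univ, true_and] at hx ⊢
    funext i
    by_cases h : c i = c' i
    · simp only [colM, if_pos h]
      have := congrFun hx i
      simpa [colM] using this.trans h.symm
    · simp only [colM, if_neg h]
      rw [flip_decide m (x i) a b hab]
      have := congrFun hx i
      simp only [colM] at this
      rw [this]
      cases hc : c i <;> cases hc' : c' i <;> simp_all
  · intro x hx
    funext i
    by_cases h : c i = c' i
    · simp [h]
    · simp [h, mul_assoc, Equiv.swap_mul_self]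
  · intro x hx
    funext i
    by_cases h : c i = c' i
    · simp [h]
    · simp [h, mul_assoc, Equiv.swap_mul_self]

/-- If `G` is an IIA GSWF whose Generalized Condorcet Winner exists with probability
at least `1 - ε`, and `F` elects the GCW of `G` whenever it exists, then `M^{a,b}(F) ≤ 2ε`
for every pair of alternatives. -/
theorem stmt10 (n m : ℕ) (hm : 3 ≤ m) (G : ProfileM n m → Fin m → Fin m → Bool)
    (hIIA : ∀ x y : ProfileM n m, ∀ a b : Fin m,
      colM n m x a b = colM n m y a b → G x a b = G y a b)
    (hanti : ∀ x : ProfileM n m, ∀ a b : Fin m, a ≠ b → G x b a = !G x a b)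
    (F : ProfileM n m → Fin m)
    (hF : ∀ x : ProfileM n m, ∀ a : Fin m, IsGCW n m G x a → F x = a)
    (ε : ℝ)
    (hG : ((univ.filter (fun x : ProfileM n m => ∃ a : Fin m, IsGCW n m G x a)).card : ℝ) /
        (Fintype.card (ProfileM n m) : ℝ) ≥ 1 - ε)
    (a b : Fin m) (hab : a ≠ b) :
    MabM n m F a b ≤ 2 * ε := by
  set N := Fintype.card (ProfileM n m) with hN
  have hNpos : 0 < N := Fintype.card_pos
  set x0 : ProfileM n m := fun _ => 1 with hx0
  set K := (univ.filter (fun x : ProfileM n m => colM n m x a b = colM n m x0 a b)).card with hK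
  have hKpos : 0 < K := by
    apply Finset.card_pos.2
    exact ⟨x0, by simp⟩
  have hfib : ∀ c : Fin n → Bool,
      (univ.filter (fun x : ProfileM n m => colM n m x a b = c)).card = K :=
    fun c => fiber_card_eq n m a b hab c (colM n m x0 a b)
  have hsum : ∀ x : ProfileM n m,
      (∑ y : ProfileM n m, if colM n m x a b = colM n m y a b then 1 else 0) = K := by
    intro x
    rw [← Finset.card_filter]
    rw [show (univ.filter (fun y : ProfileM n m => colM n m x a b = colM n m y a b)) =
        (univ.filter (fun y : ProfileM n m => colM n m y a b = colM n m x a b)) by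
      apply Finset.filter_congr; intro y _; exact eq_comm]
    exact hfib _
  -- cardinality of the denominator set
  have hdenom : (univ.filter (fun p : ProfileM n m × ProfileM n m =>
      colM n m p.1 a b = colM n m p.2 a b)).card = N * K := by
    rw [Finset.card_filter, Fintype.sum_prod_type]
    simp only [hsum]
    simp [Finset.sum_const, hN]
  set E : ProfileM n m → Prop := fun x => ∃ c : Fin m, IsGCW n m G x c with hE
  set Bad := (univ.filter (fun x : ProfileM n m => ¬ E x)).card with hBad
  -- first bad pair count
  have hbad1 : (univ.filter (fun p : ProfileM n m × ProfileM n m =>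
      (colM n m p.1 a b = colM n m p.2 a b) ∧ ¬ E p.1)).card = Bad * K := by
    rw [Finset.card_filter, Fintype.sum_prod_type]
    have : ∀ x : ProfileM n m, (∑ y : ProfileM n m,
        if (colM n m x a b = colM n m y a b) ∧ ¬ E x then 1 else 0) =
        if ¬ E x then K else 0 := by
      intro x
      by_cases h : E x
      · simp [h]
      · simp only [h, not_false_iff, if_true, and_true]
        exact hsum x
    simp only [this]
    rw [Finset.sum_ite, Finset.sum_const, Finset.sum_const_zero, add_zero, smul_eq_mul]
  have hbad2 : (univ.filter (fun p : ProfileM n m × ProfileM n m =>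
      (colM n m p.1 a b = colM n m p.2 a b) ∧ ¬ E p.2)).card = Bad * K := by
    rw [Finset.card_filter, Fintype.sum_prod_type]
    rw [Finset.sum_comm]
    have : ∀ y : ProfileM n m, (∑ x : ProfileM n m,
        if (colM n m x a b = colM n m y a b) ∧ ¬ E y then 1 else 0) =
        if ¬ E y then K else 0 := by
      intro y
      by_cases h : E y
      · simp [h]
      · simp only [h, not_false_iff, if_true, and_true]
        rw [← Finset.card_filter]
        exact hfib _
    simp only [this]
    rw [Finset.sum_ite, Finset.sum_const, Finset.sum_const_zero, add_zero, smul_eq_mul]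
  -- event inclusion
  have hincl : (univ.filter (fun p : ProfileM n m × ProfileM n m =>
      colM n m p.1 a b = colM n m p.2 a b ∧ F p.1 = a ∧ F p.2 = b)) ⊆
      (univ.filter (fun p : ProfileM n m × ProfileM n m =>
        (colM n m p.1 a b = colM n m p.2 a b) ∧ ¬ E p.1)) ∪
      (univ.filter (fun p : ProfileM n m × ProfileM n m =>
        (colM n m p.1 a b = colM n m p.2 a b) ∧ ¬ E p.2)) := by
    intro p hp
    simp only [mem_filter, mem_univ, true_and, mem_union] at hp ⊢
    obtain ⟨hcol, hFa, hFb⟩ := hp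
    by_cases h1 : E p.1
    · right
      refine ⟨hcol, ?_⟩
      intro h2
      obtain ⟨c1, hc1⟩ := h1
      obtain ⟨c2, hc2⟩ := h2
      have e1 : c1 = a := (hF p.1 c1 hc1).symm.trans hFa
      have e2 : c2 = b := (hF p.2 c2 hc2).symm.trans hFb
      rw [e1] at hc1; rw [e2] at hc2
      have g1 : G p.1 a b = true := hc1 b hab.symm
      have g2 : G p.2 b a = true := hc2 a hab
      have g3 : G p.2 b a = !G p.2 a b := hanti p.2 a b hab
      have g4 : G p.1 a b = G p.2 a b := hIIA p.1 p.2 a b hcol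
      rw [g1] at g4
      rw [g3, ← g4] at g2
      simp at g2
    · exact Or.inl ⟨hcol, h1⟩
  have hnum_le : (univ.filter (fun p : ProfileM n m × ProfileM n m =>
      colM n m p.1 a b = colM n m p.2 a b ∧ F p.1 = a ∧ F p.2 = b)).card ≤ 2 * (Bad * K) := by
    calc _ ≤ _ := Finset.card_le_card hincl
      _ ≤ _ + _ := Finset.card_union_le _ _
      _ = 2 * (Bad * K) := by rw [hbad1, hbad2]; ring
  -- Bad ≤ ε N in ℝ
  have hsplit : ((univ.filter (fun x : ProfileM n m => E x)).card) + Bad = N := by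
    rw [hBad]
    rw [Finset.card_filter_add_card_filter_not]
    exact Finset.card_univ
  have hNR : (0:ℝ) < (N:ℝ) := by exact_mod_cast hNpos
  have hBadle : (Bad : ℝ) ≤ ε * N := by
    have h1 : (1 - ε) * N ≤ ((univ.filter (fun x : ProfileM n m => E x)).card : ℝ) :=
      (le_div_iff₀ hNR).1 hG
    have h2 : ((univ.filter (fun x : ProfileM n m => E x)).card : ℝ) + Bad = N := by
      exact_mod_cast hsplit
    nlinarith
  -- finish
  rw [MabM, hdenom]
  rw [div_le_iff₀ (by exact_mod_cast Nat.mul_pos hNpos hKpos)]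
  calc ((univ.filter (fun p : ProfileM n m × ProfileM n m =>
      colM n m p.1 a b = colM n m p.2 a b ∧ F p.1 = a ∧ F p.2 = b)).card : ℝ)
      ≤ (2 * (Bad * K) : ℕ) := by exact_mod_cast hnum_le
    _ = 2 * Bad * K := by push_cast; ring
    _ ≤ 2 * (ε * N) * K := by
        have : (0:ℝ) ≤ (K:ℝ) := by positivity
        nlinarith
    _ = 2 * ε * ((N * K : ℕ) : ℝ) := by push_cast; ring
end

section
/- Let G be a GSWF on n voters and m₁+m₂ alternatives satisfying IIA. Partition the alternatives into a set S₁ of size m₁ and S₂ of size m₂, and let G₁, G₂ be the restrictions of G to S₁, S₂. Then the events 'G₁ has no Generalized Condorcet Winner' and 'G₂ has no Generalized Condorcet Winner' are independent under the uniform distribution on profiles, and Pr[G has no GCW] ≥ Pr[G₁ has no GCW] · Pr[G₂ has no GCW]. -/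
/-!
By IIA, whether the restriction of `G` to a set `S` of alternatives has a GCW depends only on
every voter's relative order on `S`. Precomposing each voter's ranking with a permutation that
preserves `S` and `Sᶜ` translates the relative orders on `S` and on `Sᶜ` independently, so the
pair of relative orders is uniformly distributed on a product; events pulled back along the two
coordinates are then independent. Finally, a GCW of `G` would be a GCW of the restriction to its
own side.
-/

open Finset
open scoped Classical

/-- The restriction of `G` to the set `S` of alternatives has no Generalized Condorcet
Winner at `x`. -/
def NoGCWin (n m : ℕ) (G : ProfileM n m → Fin m → Fin m → Bool) (S : Finset (Fin m))
    (x : ProfileM n m) : Prop :=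
  ¬ ∃ a ∈ S, ∀ b ∈ S, b ≠ a → G x a b = true

/-- Probability of an event under the uniform distribution on profiles. -/
noncomputable def Prob (n m : ℕ) (p : ProfileM n m → Prop) : ℝ :=
  ((univ.filter p).card : ℝ) / (Fintype.card (ProfileM n m) : ℝ)

open Equiv Function

section RelativeRank

variable {m : ℕ}

-- `relRank s σ i` is the rank that `σ` gives to the `i`-th smallest alternative of `s`,
-- counted within `s`.
noncomputable def relRank (s : Finset (Fin m)) (σ : Perm (Fin m)) : Perm (Fin #s) :=
  (s.orderIsoOfFin rfl).toEquiv.trans <|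
    (σ.subtypeEquiv fun a => by simp).trans
      ((s.map σ.toEmbedding).orderIsoOfFin (card_map _)).toEquiv.symm

theorem relRank_lt_relRank_iff (s : Finset (Fin m)) (σ : Perm (Fin m)) (i j : Fin #s) :
    relRank s σ i < relRank s σ j ↔
      σ (s.orderIsoOfFin rfl i) < σ (s.orderIsoOfFin rfl j) := by
  simp [relRank]

theorem Equiv.Perm.eq_of_lt_iff_lt {k : ℕ} {ρ ρ' : Perm (Fin k)}
    (h : ∀ i j, ρ i < ρ j ↔ ρ' i < ρ' j) : ρ = ρ' := by
  have hmono : StrictMono (ρ' ∘ ρ.symm) := fun i j hij => by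
    simpa [← h] using hij
  have hid : ρ' ∘ ρ.symm = id :=
    (hmono.range_inj strictMono_id).1 (by simp [Set.range_comp, ρ'.surjective.range_eq])
  exact Equiv.ext fun i => by simpa using (congrFun hid (ρ i)).symm

theorem relRank_trans (s : Finset (Fin m)) {π : Perm (Fin m)} {γ : Perm (Fin #s)}
    (hπ : ∀ i, π (s.orderIsoOfFin rfl i) = s.orderIsoOfFin rfl (γ i)) (σ : Perm (Fin m)) :
    relRank s (π.trans σ) = γ.trans (relRank s σ) :=
  Perm.eq_of_lt_iff_lt fun i j => by simp only [relRank_lt_relRank_iff, trans_apply, hπ]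

theorem lt_iff_lt_of_relRank_eq {s : Finset (Fin m)} {σ τ : Perm (Fin m)}
    (h : relRank s σ = relRank s τ) {a b : Fin m} (ha : a ∈ s) (hb : b ∈ s) :
    σ a < σ b ↔ τ a < τ b := by
  obtain ⟨i, rfl⟩ : ∃ i, (s.orderIsoOfFin rfl i : Fin m) = a :=
    ⟨(s.orderIsoOfFin rfl).symm ⟨a, ha⟩, by simp⟩
  obtain ⟨j, rfl⟩ : ∃ j, (s.orderIsoOfFin rfl j : Fin m) = b :=
    ⟨(s.orderIsoOfFin rfl).symm ⟨b, hb⟩, by simp⟩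
  rw [← relRank_lt_relRank_iff, ← relRank_lt_relRank_iff, h]

theorem exists_perm_relRank_trans (s : Finset (Fin m)) (γ₁ : Perm (Fin #s))
    (γ₂ : Perm (Fin #sᶜ)) : ∃ π : Perm (Fin m), ∀ σ,
      relRank s (π.trans σ) = γ₁.trans (relRank s σ) ∧
        relRank sᶜ (π.trans σ) = γ₂.trans (relRank sᶜ σ) := by
  let e₁ : Fin #s ≃ {a // a ∈ s} := (s.orderIsoOfFin rfl).toEquiv
  let e₂ : Fin #sᶜ ≃ {a // a ∉ s} :=
    (sᶜ.orderIsoOfFin rfl).toEquiv.trans (subtypeEquivRight fun _ => mem_compl)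
  refine ⟨Perm.subtypeCongr (e₁.permCongr γ₁) (e₂.permCongr γ₂), fun σ =>
    ⟨relRank_trans s (fun i => ?_) σ, relRank_trans sᶜ (fun j => ?_) σ⟩⟩
  · show Perm.subtypeCongr _ _ (e₁ i : Fin m) = (e₁ (γ₁ i) : Fin m)
    rw [Perm.subtypeCongr.left_apply_subtype, permCongr_apply, symm_apply_apply]
  · show Perm.subtypeCongr _ _ (e₂ j : Fin m) = (e₂ (γ₂ j) : Fin m)
    rw [Perm.subtypeCongr.right_apply_subtype, permCongr_apply, symm_apply_apply]

end RelativeRank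

section UniformFibers

variable {α β β₁ β₂ : Type*} [Fintype α]

theorem card_fiber_eq_of_forall_exists_injective [DecidableEq β] (f : α → β)
    (h : ∀ b b', ∃ g : α → α, Injective g ∧ ∀ a, f a = b → f (g a) = b') (b b' : β) :
    #{a | f a = b} = #{a | f a = b'} := by
  have key : ∀ b b', #{a | f a = b} ≤ #{a | f a = b'} := fun b b' => by
    obtain ⟨g, hg, hfg⟩ := h b b'
    exact card_le_card_of_injOn g (fun a ha => by simp_all) hg.injOn
  exact (key b b').antisymm (key b' b)

theorem card_filter_comp_of_card_fiber_eq [Fintype β] [DecidableEq β] (r : α → β) {c : ℕ}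
    (hc : ∀ b, #{a | r a = b} = c) (Q : β → Prop) [DecidablePred Q] :
    #{a | Q (r a)} = #{b | Q b} * c := by
  rw [card_eq_sum_card_fiberwise (f := r) (t := univ) fun _ _ => mem_univ _,
    ← sum_filter_add_sum_filter_not univ Q, sum_const_nat fun b hb => ?_,
    sum_eq_zero fun b hb => ?_, add_zero]
  · rw [card_eq_zero, filter_eq_empty_iff]
    rintro a ha rfl
    exact (mem_filter.1 hb).2 (mem_filter.1 ha).2
  · rw [filter_filter, ← hc b]
    congr 1
    exact filter_congr fun a _ => ⟨And.right, fun h => ⟨h ▸ (mem_filter.1 hb).2, h⟩⟩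

theorem card_filter_and_mul_card_eq [Fintype β₁] [Fintype β₂] [DecidableEq β₁] [DecidableEq β₂]
    (r : α → β₁ × β₂) {c : ℕ} (hc : ∀ b, #{a | r a = b} = c) (A B : α → Prop)
    (hA : ∀ a a', (r a).1 = (r a').1 → A a → A a')
    (hB : ∀ a a', (r a).2 = (r a').2 → B a → B a') :
    #{a | A a ∧ B a} * Fintype.card α = #{a | A a} * #{a | B a} := by
  set Q₁ : β₁ → Prop := fun p => ∃ a, (r a).1 = p ∧ A a
  set Q₂ : β₂ → Prop := fun p => ∃ a, (r a).2 = p ∧ B a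
  have hA' (a : α) : A a ↔ Q₁ (r a).1 := ⟨fun h => ⟨a, rfl, h⟩, fun ⟨a', h, h'⟩ => hA a' a h h'⟩
  have hB' (a : α) : B a ↔ Q₂ (r a).2 := ⟨fun h => ⟨a, rfl, h⟩, fun ⟨a', h, h'⟩ => hB a' a h h'⟩
  have cardAB := card_filter_comp_of_card_fiber_eq r hc fun p => Q₁ p.1 ∧ Q₂ p.2
  have cardA := card_filter_comp_of_card_fiber_eq r hc fun p => Q₁ p.1
  have cardB := card_filter_comp_of_card_fiber_eq r hc fun p => Q₂ p.2
  have cardα := card_filter_comp_of_card_fiber_eq r hc fun _ => True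
  rw [← univ_product_univ, filter_product, card_product] at cardAB
  rw [← univ_product_univ, filter_product_left (s := univ) (t := (univ : Finset β₂)) Q₁,
    card_product] at cardA
  rw [← univ_product_univ, filter_product_right (s := (univ : Finset β₁)) (t := univ) Q₂,
    card_product] at cardB
  rw [filter_true, filter_true, card_univ, card_univ, Fintype.card_prod] at cardα
  simp only [hA', hB', cardAB, cardA, cardB, cardα, card_univ]
  ring

end UniformFibers

section Profiles

variable {n m : ℕ}

noncomputable def relRanks (s : Finset (Fin m)) (x : ProfileM n m) :
    (Fin n → Perm (Fin #s)) × (Fin n → Perm (Fin #sᶜ)) :=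
  (fun i => relRank s (x i), fun i => relRank sᶜ (x i))

theorem card_relRanks_fiber_eq (s : Finset (Fin m))
    (b b' : (Fin n → Perm (Fin #s)) × (Fin n → Perm (Fin #sᶜ))) :
    #{x : ProfileM n m | relRanks s x = b} = #{x | relRanks s x = b'} := by
  refine card_fiber_eq_of_forall_exists_injective _ (fun b b' => ?_) b b'
  choose π hπ using fun i =>
    exists_perm_relRank_trans s ((b'.1 i).trans (b.1 i).symm) ((b'.2 i).trans (b.2 i).symm)
  refine ⟨fun x i => (π i).trans (x i), fun x y hxy => funext fun i => ?_, ?_⟩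
  · exact mul_left_injective (π i) (congrFun hxy i)
  · rintro x rfl
    ext i : 2 <;> simp [relRanks, hπ, trans_assoc]

theorem noGCWin_of_relRank_eq {G : ProfileM n m → Fin m → Fin m → Bool}
    (hIIA : ∀ x y : ProfileM n m, ∀ a b : Fin m,
      colM n m x a b = colM n m y a b → G x a b = G y a b)
    {s : Finset (Fin m)} {x y : ProfileM n m} (hxy : ∀ i, relRank s (x i) = relRank s (y i))
    (hx : NoGCWin n m G s x) : NoGCWin n m G s y := by
  rintro ⟨a, ha, hwin⟩
  refine hx ⟨a, ha, fun b hb hba => ?_⟩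
  rw [hIIA x y a b (funext fun i => decide_eq_decide.2 (lt_iff_lt_of_relRank_eq (hxy i) ha hb))]
  exact hwin b hb hba

theorem not_exists_gcw_of_noGCWin_compl {G : ProfileM n m → Fin m → Fin m → Bool}
    {s : Finset (Fin m)} {x : ProfileM n m} (h : NoGCWin n m G s x) (hc : NoGCWin n m G sᶜ x) :
    ¬ ∃ a, ∀ b, b ≠ a → G x a b = true := by
  rintro ⟨a, hwin⟩
  by_cases ha : a ∈ s
  · exact h ⟨a, ha, fun b _ => hwin b⟩
  · exact hc ⟨a, mem_compl.2 ha, fun b _ => hwin b⟩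

theorem prob_mono {p q : ProfileM n m → Prop} (h : ∀ x, p x → q x) : Prob n m p ≤ Prob n m q :=
  div_le_div_of_nonneg_right
    (by exact_mod_cast card_le_card (monotone_filter_right _ fun x _ => h x)) (Nat.cast_nonneg _)

theorem prob_and_eq_mul_of_card {p q : ProfileM n m → Prop}
    (h : #{x | p x ∧ q x} * Fintype.card (ProfileM n m) = #{x | p x} * #{x | q x}) :
    Prob n m (fun x => p x ∧ q x) = Prob n m p * Prob n m q := by
  have hN : (Fintype.card (ProfileM n m) : ℝ) ≠ 0 := by positivity
  rw [Prob, Prob, Prob, div_mul_div_comm, div_eq_div_iff hN (mul_ne_zero hN hN), ← mul_assoc]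
  norm_cast
  convert congrArg (· * Fintype.card (ProfileM n m)) h

end Profiles

theorem stmt16_general (n m₁ m₂ : ℕ) (G : ProfileM n (m₁ + m₂) → Fin (m₁ + m₂) → Fin (m₁ + m₂) → Bool)
    (hIIA : ∀ x y : ProfileM n (m₁ + m₂), ∀ a b : Fin (m₁ + m₂),
      colM n (m₁ + m₂) x a b = colM n (m₁ + m₂) y a b → G x a b = G y a b)
    (S₁ S₂ : Finset (Fin (m₁ + m₂))) (hS₂ : S₂ = S₁ᶜ) :
    Prob n (m₁ + m₂) (fun x => NoGCWin n (m₁ + m₂) G S₁ x ∧ NoGCWin n (m₁ + m₂) G S₂ x) =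
      Prob n (m₁ + m₂) (NoGCWin n (m₁ + m₂) G S₁) *
        Prob n (m₁ + m₂) (NoGCWin n (m₁ + m₂) G S₂) ∧
    Prob n (m₁ + m₂) (fun x => ¬ ∃ a : Fin (m₁ + m₂), ∀ b : Fin (m₁ + m₂),
        b ≠ a → G x a b = true) ≥
      Prob n (m₁ + m₂) (NoGCWin n (m₁ + m₂) G S₁) *
        Prob n (m₁ + m₂) (NoGCWin n (m₁ + m₂) G S₂) := by
  subst hS₂
  have indep := prob_and_eq_mul_of_card <|
    card_filter_and_mul_card_eq (relRanks S₁) (fun b => card_relRanks_fiber_eq S₁ b 1) _ _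
      (fun x y h => noGCWin_of_relRank_eq hIIA (congrFun h))
      (fun x y h => noGCWin_of_relRank_eq hIIA (congrFun h))
  refine ⟨indep, ?_⟩
  rw [← indep]
  exact prob_mono fun x hx => not_exists_gcw_of_noGCWin_compl hx.1 hx.2

/-- For an IIA GSWF on `m₁ + m₂` alternatives and a partition of the alternatives into `S₁`
of size `m₁` and its complement `S₂`, the events that the restrictions to `S₁` and `S₂` have
no Generalized Condorcet Winner are independent, and the probability that `G` itself has no
GCW is at least the product of their probabilities. -/
theorem stmt16 (n m₁ m₂ : ℕ) (G : ProfileM n (m₁ + m₂) → Fin (m₁ + m₂) → Fin (m₁ + m₂) → Bool)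
    (hIIA : ∀ x y : ProfileM n (m₁ + m₂), ∀ a b : Fin (m₁ + m₂),
      colM n (m₁ + m₂) x a b = colM n (m₁ + m₂) y a b → G x a b = G y a b)
    (S₁ S₂ : Finset (Fin (m₁ + m₂))) (hS₁ : S₁.card = m₁) (hS₂ : S₂ = S₁ᶜ) :
    Prob n (m₁ + m₂) (fun x => NoGCWin n (m₁ + m₂) G S₁ x ∧ NoGCWin n (m₁ + m₂) G S₂ x) =
      Prob n (m₁ + m₂) (NoGCWin n (m₁ + m₂) G S₁) *
        Prob n (m₁ + m₂) (NoGCWin n (m₁ + m₂) G S₂) ∧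
    Prob n (m₁ + m₂) (fun x => ¬ ∃ a : Fin (m₁ + m₂), ∀ b : Fin (m₁ + m₂),
        b ≠ a → G x a b = true) ≥
      Prob n (m₁ + m₂) (NoGCWin n (m₁ + m₂) G S₁) *
        Prob n (m₁ + m₂) (NoGCWin n (m₁ + m₂) G S₂) :=
  stmt16_general n m₁ m₂ G hIIA S₁ S₂ hS₂
end
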